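/- Let k ≥ 1 be an integer and let T be a balanced tree on 2k or 2k+1 vertices. Let G be a T̂-free graph on n ≥ 2 vertices with minimum degree δ(G) ≥ n/2. Then the maximum degree of G satisfies Δ(G) ≤ n/2 + 2k. -/

import Mathlib

/-!
If some vertex `v` had degree above `n/2 + 2k`, then, since every vertex has degree at least
`n/2`, each neighbour of `v` would have more than `2k` neighbours inside `N(v)`. So `G[N(v)]`
has minimum degree at least `|T| - 1`, and the greedy argument (remove a leaf, embed the rest,
send the leaf to an unused neighbour of the image of its parent) embeds `T` into `N(v)`.
Adding `v` as the apex gives a copy of `T̂`.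
-/

/-- The suspension `Ĥ` of a graph `H`: a new vertex (`none`) joined to all of `H`. -/
def suspension {V : Type*} (H : SimpleGraph V) : SimpleGraph (Option V) :=
  SimpleGraph.fromRel (fun x y => x = none ∨ ∃ a b, x = some a ∧ y = some b ∧ H.Adj a b)

open SimpleGraph Function

variable {α V W U : Type*}

lemma Set.ncard_add_ncard_le_ncard_inter_add_card [Finite α] (s t : Set α) :
    s.ncard + t.ncard ≤ (s ∩ t).ncard + Nat.card α := by
  rw [← Set.ncard_inter_add_ncard_union s t]
  gcongr
  exact Set.ncard_le_card _

lemma SimpleGraph.ncard_neighborSet_induce (G : SimpleGraph U) (s : Set U) (u : s) :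
    ((G.induce s).neighborSet u).ncard = (G.neighborSet u ∩ s).ncard := by
  rw [← Set.ncard_preimage_of_injective_subset_range (s := G.neighborSet u ∩ s)
    Subtype.val_injective (Subtype.range_coe.superset.trans' Set.inter_subset_right)]
  congr 1
  ext x
  simp

@[simp] lemma suspension_adj_some_some {H : SimpleGraph V} {a b : V} :
    (suspension H).Adj (some a) (some b) ↔ H.Adj a b := by
  simpa [suspension, H.adj_comm b a] using fun h => H.ne_of_adj h

lemma exists_injective_suspension_hom {H : SimpleGraph V} {G : SimpleGraph W} (f : H →g G)
    (hf : Injective f) {w : W} (hw : ∀ x, G.Adj w (f x)) :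
    ∃ g : suspension H →g G, Injective g := by
  refine ⟨⟨fun o => o.elim w f, ?_⟩, ?_⟩
  · rintro (_ | a) (_ | b) hab
    · exact absurd hab (suspension H).irrefl
    · exact hw b
    · exact (hw a).symm
    · exact f.map_adj (suspension_adj_some_some.mp hab)
  · rintro (_ | a) (_ | b) hab
    · rfl
    · exact absurd hab (hw b).ne
    · exact absurd hab (hw a).ne'
    · exact congrArg some (hf hab)

namespace SimpleGraph

lemma exists_injective_hom_of_leaf {T : SimpleGraph W} {G : SimpleGraph U} {v : W}
    {u : ({v}ᶜ : Set W)} (hleaf : ∀ x, T.Adj v x ↔ x = u) (f : T.induce {v}ᶜ →g G)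
    (hf : Injective f) {w : U} (hw : w ∉ Set.range f) (hadj : G.Adj (f u) w) :
    ∃ g : T →g G, Injective g := by
  classical
  let g (x : W) : U := if hx : x = v then w else f ⟨x, hx⟩
  have hgv : g v = w := dif_pos rfl
  have hg (x : ({v}ᶜ : Set W)) : g x = f x := dif_neg x.2
  have hadj_v (b : W) (hb : T.Adj v b) : G.Adj (g v) (g b) := by
    obtain rfl := (hleaf b).mp hb
    rw [hgv, hg]
    exact hadj.symm
  have hinj_v (b : ({v}ᶜ : Set W)) : g v ≠ g b := by
    rw [hgv, hg]
    exact fun h => hw ⟨b, h.symm⟩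
  have hmap {a b : W} (hab : T.Adj a b) : G.Adj (g a) (g b) := by
    by_cases ha : a = v
    · exact ha ▸ hadj_v b (ha ▸ hab)
    by_cases hb : b = v
    · exact (hb ▸ hadj_v a (hb ▸ hab.symm)).symm
    · exact (hg ⟨a, ha⟩).symm ▸ (hg ⟨b, hb⟩).symm ▸ f.map_adj (induce_adj.mpr hab)
  have hinj : Injective g := by
    intro a b hab
    by_cases ha : a = v <;> by_cases hb : b = v
    · rw [ha, hb]
    · exact absurd (ha ▸ hab) (hinj_v ⟨b, hb⟩)
    · exact absurd (hb ▸ hab).symm (hinj_v ⟨a, ha⟩)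
    · rw [hg ⟨a, ha⟩, hg ⟨b, hb⟩] at hab
      exact congrArg Subtype.val (hf hab)
  exact ⟨⟨g, hmap⟩, hinj⟩

theorem IsTree.exists_injective_hom [Finite W] {T : SimpleGraph W} (hT : T.IsTree)
    {G : SimpleGraph U} [Nonempty U] (hG : ∀ u, Nat.card W - 1 ≤ (G.neighborSet u).ncard) :
    ∃ f : T →g G, Injective f := by
  induction hm : Nat.card W generalizing W with
  | zero =>
    have := hT.connected.nonempty
    exact absurd hm Nat.card_pos.ne'
  | succ m ih =>
    rcases subsingleton_or_nontrivial W with hW | hW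
    · exact ⟨⟨fun _ => Classical.arbitrary U, fun hab => (hab.ne (Subsingleton.elim _ _)).elim⟩,
        fun a b _ => Subsingleton.elim a b⟩
    classical
    have := Fintype.ofFinite W
    obtain ⟨v, hv⟩ := hT.exists_vert_degree_one_of_nontrivial
    obtain ⟨u, hvu, hleaf⟩ := degree_eq_one_iff_existsUnique_adj.mp hv
    have hT' : (T.induce {v}ᶜ).IsTree :=
      ⟨hT.connected.induce_compl_singleton_of_degree_eq_one hv, hT.isAcyclic.induce _⟩
    have hcard : Nat.card ({v}ᶜ : Set W) = m := by
      rw [Nat.card_coe_set_eq, Set.ncard_compl, Set.ncard_singleton, hm]; rfl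
    obtain ⟨f, hf⟩ := ih hT' (fun x => by have := hG x; omega) hcard
    let u' : ({v}ᶜ : Set W) := ⟨u, hvu.ne'⟩
    have hm1 : 1 < m + 1 := hm ▸ Finite.one_lt_card
    have hlt : (Set.range f \ {f u'}).ncard < (G.neighborSet (f u')).ncard := by
      rw [Set.ncard_sdiff_singleton_of_mem (Set.mem_range_self u'),
        Set.ncard_range_of_injective hf, hcard]
      have := hG (f u'); omega
    obtain ⟨w, hw, hwf⟩ := Set.exists_mem_notMem_of_ncard_lt_ncard hlt
    exact exists_injective_hom_of_leaf (u := u') (fun x => ⟨hleaf x, fun h => h ▸ hvu⟩) f hf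
      (fun h => hwf ⟨h, (G.ne_of_adj hw).symm⟩) hw

end SimpleGraph

theorem stmt11_general (k : ℕ)
    {V : Type} [Fintype V] (T : SimpleGraph V)
    (htree : T.IsTree)
    (hcard : Fintype.card V = 2 * k ∨ Fintype.card V = 2 * k + 1)
    (n : ℕ)
    (G : SimpleGraph (Fin n))
    (hfree : ¬ ∃ f : suspension T →g G, Function.Injective f)
    (hmindeg : ∀ v : Fin n, n ≤ 2 * (G.neighborSet v).ncard) :
    ∀ v : Fin n, 2 * (G.neighborSet v).ncard ≤ n + 4 * k := by
  intro v
  by_contra! hbig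
  set S := G.neighborSet v
  have : Nonempty S := (Set.nonempty_of_ncard_ne_zero (by omega)).to_subtype
  have hdeg : ∀ u : S, Nat.card V - 1 ≤ ((G.induce S).neighborSet u).ncard := by
    intro u
    have hcommon := Set.ncard_add_ncard_le_ncard_inter_add_card (G.neighborSet u) S
    rw [Nat.card_eq_fintype_card, Fintype.card_fin] at hcommon
    rw [Nat.card_eq_fintype_card, ncard_neighborSet_induce]
    have := hmindeg u
    omega
  obtain ⟨f, hf⟩ := htree.exists_injective_hom hdeg
  exact hfree (exists_injective_suspension_hom ((Embedding.induce S).toHom.comp f)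
    (Subtype.val_injective.comp hf) fun x => (f x).2)

theorem stmt11 (k : ℕ) (hk : 1 ≤ k)
    {V : Type} [Fintype V] [DecidableEq V] (T : SimpleGraph V)
    (htree : T.IsTree)
    (hcard : Fintype.card V = 2 * k ∨ Fintype.card V = 2 * k + 1)
    (A : Finset V) (hA : A.card = k)
    (hAind : ∀ x ∈ A, ∀ y ∈ A, ¬ T.Adj x y)
    (hAcind : ∀ x ∈ Aᶜ, ∀ y ∈ Aᶜ, ¬ T.Adj x y)
    (n : ℕ) (hn : 2 ≤ n)
    (G : SimpleGraph (Fin n))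
    (hfree : ¬ ∃ f : suspension T →g G, Function.Injective f)
    (hmindeg : ∀ v : Fin n, n ≤ 2 * (G.neighborSet v).ncard) :
    ∀ v : Fin n, 2 * (G.neighborSet v).ncard ≤ n + 4 * k :=
  stmt11_general k T htree hcard n G hfree hmindeg
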